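/- arXiv:2512.15709 — 3 statements merged into one kernel-verified Lean document; each statement's English description precedes it below -/
import Mathlib

section
/- Let (a_n)_{n ≥ 1} be complex numbers and σ ∈ ℝ such that ∑_{n ≥ 1} |a_n| n^{−σ} < ∞. Let φ : ℝ → ℂ be integrable. Then for every x > 0 and every T > 0, (1/(2πT)) · ∫_ℝ φ(t/T) · (∑_{n ≥ 1} a_n n^{−(σ+it)}) · x^{σ+it} dt = (1/(2π)) · ∑_{n ≥ 1} a_n (x/n)^σ · φ̂((T/(2π))·log(n/x)). -/
open Real MeasureTheory
open scoped FourierTransform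

/-! The Dirichlet series times `x ^ (σ + i t)` is a series of characters `t ↦ exp (-i t log (n / x))`
with coefficients `a n (x / n) ^ σ`; integrating each character against `φ (t / T)` gives a
rescaled Fourier transform of `φ`, and the interchange of sum and integral is justified by
`∑ |a n| n ^ (-σ) < ∞`, since every character has modulus one. -/

lemma ofReal_cpow_neg_mul_ofReal_cpow {x y : ℝ} (hx : 0 < x) (hy : 0 < y) (σ t : ℝ) :
    (y : ℂ) ^ (-((σ : ℂ) + t * Complex.I)) * (x : ℂ) ^ ((σ : ℂ) + t * Complex.I)
      = (((x / y) ^ σ : ℝ) : ℂ) * Complex.exp (↑(-(t * Real.log (y / x))) * Complex.I) := by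
  rw [Complex.cpow_def_of_ne_zero (by exact_mod_cast hy.ne'),
    Complex.cpow_def_of_ne_zero (by exact_mod_cast hx.ne'), ← Complex.exp_add,
    ← Complex.ofReal_log hy.le, ← Complex.ofReal_log hx.le, Real.rpow_def_of_pos (div_pos hx hy),
    Complex.ofReal_exp, ← Complex.exp_add, Real.log_div hx.ne' hy.ne', Real.log_div hy.ne' hx.ne']
  push_cast
  ring_nf

lemma integral_exp_neg_mul_I_smul_comp_div {E : Type*} [NormedAddCommGroup E] [NormedSpace ℂ E]
    (φ : ℝ → E) (L : ℝ) {T : ℝ} (hT : T ≠ 0) :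
    ∫ t : ℝ, Complex.exp (↑(-(t * L)) * Complex.I) • φ (t / T)
      = |T| • 𝓕 φ (T / (2 * π) * L) := by
  have hrescale := Measure.integral_comp_div
    (fun u : ℝ => Complex.exp (↑(-(T * u * L)) * Complex.I) • φ u) T
  simp only [mul_div_cancel₀ _ hT] at hrescale
  rw [hrescale, Real.fourier_real_eq_integral_exp_smul]
  congr 3 with u
  field_simp

lemma mul_natCast_cpow_neg_mul_ofReal_cpow {a : ℕ → ℂ} (ha0 : a 0 = 0) {x : ℝ} (hx : 0 < x)
    (σ t : ℝ) (n : ℕ) :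
    a n * (n : ℂ) ^ (-((σ : ℂ) + t * Complex.I)) * (x : ℂ) ^ ((σ : ℂ) + t * Complex.I)
      = a n * (((x / n) ^ σ : ℝ) : ℂ) * Complex.exp (↑(-(t * Real.log (n / x))) * Complex.I) := by
  rcases Nat.eq_zero_or_pos n with rfl | hn
  · simp [ha0]
  · rw [mul_assoc, ← Complex.ofReal_natCast,
      ofReal_cpow_neg_mul_ofReal_cpow hx (Nat.cast_pos.mpr hn), mul_assoc]

lemma summable_norm_mul_div_rpow {a : ℕ → ℂ} {σ : ℝ}
    (hsum : Summable fun n : ℕ => ‖a n‖ * (n : ℝ) ^ (-σ)) {x : ℝ} (hx : 0 ≤ x) :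
    Summable fun n : ℕ => ‖a n * (((x / n) ^ σ : ℝ) : ℂ)‖ := by
  refine (hsum.mul_right (x ^ σ)).congr_cofinite ?_
  filter_upwards [Filter.eventually_cofinite_ne 0] with n hn
  have hn' : (0 : ℝ) ≤ n := n.cast_nonneg
  rw [norm_mul, Complex.norm_real, Real.norm_of_nonneg (by positivity),
    Real.div_rpow hx hn', Real.rpow_neg hn']
  ring

lemma integral_tsum_smul_exp_mul_I_smul {α ι E : Type*} [MeasurableSpace α] {μ : Measure α}
    [Countable ι] [NormedAddCommGroup E] [NormedSpace ℂ E] {c : ι → ℂ}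
    (hc : Summable fun i => ‖c i‖) {θ : ι → α → ℝ} (hθ : ∀ i, Measurable (θ i)) {ψ : α → E}
    (hψ : Integrable ψ μ) :
    ∫ a, ∑' i, c i • Complex.exp (θ i a * Complex.I) • ψ a ∂μ
      = ∑' i, c i • ∫ a, Complex.exp (θ i a * Complex.I) • ψ a ∂μ := by
  have hnorm : ∀ i a, ‖c i • Complex.exp (θ i a * Complex.I) • ψ a‖ = ‖c i‖ * ‖ψ a‖ := by
    intro i a
    rw [norm_smul, norm_smul, Complex.norm_exp_ofReal_mul_I, one_mul]
  have hint : ∀ i, Integrable (fun a => Complex.exp (θ i a * Complex.I) • ψ a) μ := fun i =>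
    hψ.bdd_smul 1 (by fun_prop) (.of_forall fun a => (Complex.norm_exp_ofReal_mul_I _).le)
  have hsummable : Summable fun i => ∫ a, ‖c i • Complex.exp (θ i a * Complex.I) • ψ a‖ ∂μ := by
    simpa only [hnorm, integral_const_mul] using hc.mul_right _
  rw [← integral_tsum_of_summable_integral_norm
    (F := fun i a => c i • Complex.exp (θ i a * Complex.I) • ψ a)
    (fun i => (hint i).smul (c i)) hsummable]
  simp_rw [integral_smul]

theorem stmt_4 (a : ℕ → ℂ) (ha0 : a 0 = 0) (σ : ℝ)
    (hsum : Summable fun n : ℕ => ‖a n‖ * (n : ℝ) ^ (-σ))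
    (φ : ℝ → ℂ) (hφ : Integrable φ)
    (x T : ℝ) (hx : 0 < x) (hT : 0 < T) :
    (1 / (2 * π * T) : ℂ) *
        ∫ t : ℝ, φ (t / T) * (∑' n : ℕ, a n * (n : ℂ) ^ (-((σ : ℂ) + t * Complex.I)))
          * (x : ℂ) ^ ((σ : ℂ) + t * Complex.I)
      = (1 / (2 * π) : ℂ) *
          ∑' n : ℕ, a n * (((x / (n : ℝ)) ^ σ : ℝ) : ℂ)
            * 𝓕 φ (T / (2 * π) * Real.log ((n : ℝ) / x)) := by
  have hseries : ∀ t : ℝ,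
      φ (t / T) * (∑' n : ℕ, a n * (n : ℂ) ^ (-((σ : ℂ) + t * Complex.I)))
          * (x : ℂ) ^ ((σ : ℂ) + t * Complex.I)
        = ∑' n : ℕ, (a n * (((x / n) ^ σ : ℝ) : ℂ))
            • Complex.exp (↑(-(t * Real.log (n / x))) * Complex.I) • φ (t / T) := by
    intro t
    rw [← tsum_mul_left, ← tsum_mul_right]
    refine tsum_congr fun n => ?_
    rw [smul_eq_mul, smul_eq_mul]
    linear_combination φ (t / T) * mul_natCast_cpow_neg_mul_ofReal_cpow ha0 hx σ t n
  simp_rw [hseries]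
  rw [integral_tsum_smul_exp_mul_I_smul (summable_norm_mul_div_rpow hsum hx.le)
    (θ := fun n t => -(t * Real.log (n / x))) (fun n => by fun_prop) (hφ.comp_div hT.ne')]
  simp_rw [integral_exp_neg_mul_I_smul_comp_div φ _ hT.ne', abs_of_pos hT, Complex.real_smul,
    smul_eq_mul, mul_left_comm _ (T : ℂ), tsum_mul_left]
  have hT' : (T : ℂ) ≠ 0 := by exact_mod_cast hT.ne'
  field_simp
end

section
/- Let φ : ℝ → ℂ be such that both φ and its Fourier transform φ̂ are integrable. Let T > 0 and ε > 0, and define Φ(t) = φ(t)/(iTt + ε). Then for every ξ ∈ ℝ, the Fourier transform of Φ satisfies Φ̂(ξ) = (2π/T) · ∫_ξ^∞ e^{−2π(y−ξ)ε/T} · φ̂(y) dy. -/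
open Real MeasureTheory
open scoped FourierTransform

/-! The factor `1 / (i T t + ε)` is, up to the constant `T / 2π` and a phase, the Fourier
transform of the one-sided exponential `G = 1_{[ξ, ∞)} · exp (-(2π ε / T) (y - ξ))`.
So `Φ̂(ξ) = (2π / T) ∫ φ · 𝓕 G`, and the multiplication formula `∫ φ · 𝓕 G = ∫ 𝓕 φ · G`
turns this into the right-hand side. -/

theorem integral_fourier_mul_eq {V : Type*} [NormedAddCommGroup V] [InnerProductSpace ℝ V]
    [MeasurableSpace V] [BorelSpace V] [FiniteDimensional ℝ V] {f g : V → ℂ}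
    (hf : Integrable f) (hg : Integrable g) :
    ∫ w, 𝓕 f w * g w = ∫ v, f v * 𝓕 g v := by
  simpa using! VectorFourier.integral_fourierIntegral_smul_eq_flip (L := innerₗ V)
    Real.continuous_fourierChar continuous_inner hf hg

theorem integrable_indicator_Ici_cexp {c : ℂ} (hc : 0 < c.re) (ξ : ℝ) :
    Integrable (Set.indicator (Set.Ici ξ) fun y : ℝ => Complex.exp (-c * (y - ξ))) := by
  rw [integrable_indicator_iff measurableSet_Ici, integrableOn_Ici_iff_integrableOn_Ioi]
  refine IntegrableOn.congr_fun
    ((integrableOn_exp_mul_complex_Ioi (a := -c) (by simpa) ξ).const_mul (Complex.exp (c * ξ)))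
    (fun y _ => ?_) measurableSet_Ioi
  rw [← Complex.exp_add]
  ring_nf

theorem fourier_indicator_Ici_cexp {c : ℂ} (hc : 0 < c.re) (ξ t : ℝ) :
    𝓕 (Set.indicator (Set.Ici ξ) fun y : ℝ => Complex.exp (-c * (y - ξ))) t
      = Complex.exp (-2 * π * Complex.I * ξ * t) / (c + 2 * π * Complex.I * t) := by
  set a : ℂ := -(c + 2 * π * Complex.I * t)
  have ha : a.re < 0 := by simpa [a] using hc
  have hintegrand : ∀ y : ℝ, Complex.exp (↑(-2 * π * y * t) * Complex.I) •
      Set.indicator (Set.Ici ξ) (fun y : ℝ => Complex.exp (-c * (y - ξ))) y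
        = Set.indicator (Set.Ici ξ) (fun y : ℝ => Complex.exp (c * ξ) * Complex.exp (a * y)) y := by
    intro y
    by_cases hy : y ∈ Set.Ici ξ
    · simp only [Set.indicator_of_mem hy, smul_eq_mul, ← Complex.exp_add, a]
      push_cast
      ring_nf
    · simp [Set.indicator_of_notMem hy]
  rw [Real.fourier_real_eq_integral_exp_smul]
  simp_rw [hintegrand]
  rw [integral_indicator measurableSet_Ici, integral_Ici_eq_integral_Ioi, integral_const_mul,
    integral_exp_mul_complex_Ioi ha, mul_div_assoc', mul_neg, ← Complex.exp_add]
  have hne : c + 2 * π * Complex.I * t ≠ 0 := fun h => by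
    have := congrArg Complex.re h
    simp at this
    linarith
  simp only [a]
  field_simp
  ring_nf

theorem ofReal_two_pi_div_mul_fourier_indicator_Ici_cexp {T ε : ℝ} (hT : 0 < T) (hε : 0 < ε)
    (ξ t : ℝ) :
    ((2 * π / T : ℝ) : ℂ) * 𝓕 (Set.indicator (Set.Ici ξ)
        fun y : ℝ => Complex.exp (-((2 * π * ε / T : ℝ) : ℂ) * (y - ξ))) t
      = Complex.exp (-2 * π * Complex.I * ξ * t) / (Complex.I * T * t + ε) := by
  have hk : ((2 * π / T : ℝ) : ℂ) ≠ 0 := by exact_mod_cast (by positivity : 2 * π / T ≠ 0)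
  have hfactor : ((2 * π * ε / T : ℝ) : ℂ) + 2 * π * Complex.I * t
      = ((2 * π / T : ℝ) : ℂ) * (Complex.I * T * t + ε) := by
    have hT' : (T : ℂ) ≠ 0 := by exact_mod_cast hT.ne'
    push_cast
    field_simp
    ring
  rw [fourier_indicator_Ici_cexp (by simp only [Complex.ofReal_re]; positivity), hfactor,
    mul_div_assoc', mul_div_mul_left _ _ hk]

theorem stmt_5_general (φ : ℝ → ℂ) (hφ : Integrable φ)
    (T ε : ℝ) (hT : 0 < T) (hε : 0 < ε) (ξ : ℝ) :
    𝓕 (fun t : ℝ => φ t / (Complex.I * T * t + ε)) ξ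
      = ((2 * π / T : ℝ) : ℂ) *
          ∫ y in Set.Ici ξ, (Real.exp (-(2 * π * (y - ξ) * ε / T)) : ℂ) * 𝓕 φ y := by
  set c : ℂ := ((2 * π * ε / T : ℝ) : ℂ)
  set G := Set.indicator (Set.Ici ξ) fun y : ℝ => Complex.exp (-c * (y - ξ))
  have hG : Integrable G :=
    integrable_indicator_Ici_cexp (by simp only [c, Complex.ofReal_re]; positivity) ξ
  calc 𝓕 (fun t : ℝ => φ t / (Complex.I * T * t + ε)) ξ
      = ((2 * π / T : ℝ) : ℂ) * ∫ t, φ t * 𝓕 G t := by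
        rw [Real.fourier_real_eq_integral_exp_smul, ← integral_const_mul]
        congr 1 with t
        rw [mul_left_comm, ofReal_two_pi_div_mul_fourier_indicator_Ici_cexp hT hε]
        push_cast
        ring_nf
    _ = ((2 * π / T : ℝ) : ℂ) * ∫ y, 𝓕 φ y * G y := by
        rw [integral_fourier_mul_eq hφ hG]
    _ = _ := by
        rw [← integral_indicator measurableSet_Ici]
        congr 2 with y
        by_cases hy : y ∈ Set.Ici ξ
        · simp only [G, c, hy, Set.indicator_of_mem, Complex.ofReal_exp, mul_comm (𝓕 φ y)]
          push_cast
          ring_nf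
        · simp [G, hy]

theorem stmt_5 (φ : ℝ → ℂ) (hφ : Integrable φ) (hφhat : Integrable (𝓕 φ))
    (T ε : ℝ) (hT : 0 < T) (hε : 0 < ε) (ξ : ℝ) :
    𝓕 (fun t : ℝ => φ t / (Complex.I * T * t + ε)) ξ
      = ((2 * π / T : ℝ) : ℂ) *
          ∫ y in Set.Ici ξ, (Real.exp (-(2 * π * (y - ξ) * ε / T)) : ℂ) * 𝓕 φ y :=
  stmt_5_general φ hφ T ε hT hε ξ
end

section
/- For every complex z ≠ 0 with |Im z| ≤ π/4, one has |cosh(z)/sinh(z) − z/(sinh z)^2| < 1; and for every complex z ≠ 0 with |Im z| ≤ π/2, one has |cosh(z)/sinh(z) − z/(sinh z)^2| ≤ |z|. (Here coth z − z·csch^2 z is the derivative of z·coth z, which is regular at 0.) -/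
/-!
With `w = 2 * z = u + v * I` the function is `(sinh w - w) / (cosh w - 1)`, and
`‖cosh w - 1‖ = cosh u - cos v`.

For `|v| ≤ π / 2`, the difference `(cosh u - cos v) ^ 2 - ‖sinh w - w‖ ^ 2` splits as
`((1 - cos v) ^ 2 - (v - sin v) ^ 2) + 2 (cosh u - 1) (v sin v + cos v - 1)
  + 2 cos v (u sinh u - 2 (cosh u - 1)) + (2 (cosh u - 1) - u ^ 2)`,
a sum of terms that are nonnegative by one-variable calculus, and positive unless `w = 0`.

For `|v| ≤ π`, writing `sinh w - w = ∫₀¹ w (cosh (t w) - 1) dt` gives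
`‖sinh w - w‖ ≤ ‖w‖ (sinh u / u - sin v / v)`, and `sinh u / u ≤ (1 + cosh u) / 2`,
`sin v / v ≥ (1 + cos v) / 2` reduce to `tanh x ≤ x` and `x ≤ tan x` at `x = u / 2, v / 2`.
-/

open Real

lemma le_of_hasDerivAt_of_nonneg {f f' : ℝ → ℝ} {a b : ℝ} (hab : a ≤ b)
    (hf : ∀ x ∈ Set.Icc a b, HasDerivAt f (f' x) x) (hf' : ∀ x ∈ Set.Ioo a b, 0 ≤ f' x) :
    f a ≤ f b := by
  refine monotoneOn_of_hasDerivWithinAt_nonneg (f' := f') (convex_Icc a b)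
    (fun x hx => (hf x hx).continuousAt.continuousWithinAt) ?_ ?_
    (Set.left_mem_Icc.2 hab) (Set.right_mem_Icc.2 hab) hab
  · rw [interior_Icc]
    exact fun x hx => (hf x (Set.Ioo_subset_Icc_self hx)).hasDerivWithinAt
  · rwa [interior_Icc]

lemma lt_of_hasDerivAt_of_pos {f f' : ℝ → ℝ} {a b : ℝ} (hab : a < b)
    (hf : ∀ x ∈ Set.Icc a b, HasDerivAt f (f' x) x) (hf' : ∀ x ∈ Set.Ioo a b, 0 < f' x) :
    f a < f b := by
  refine strictMonoOn_of_hasDerivWithinAt_pos (f' := f') (convex_Icc a b)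
    (fun x hx => (hf x hx).continuousAt.continuousWithinAt) ?_ ?_
    (Set.left_mem_Icc.2 hab.le) (Set.right_mem_Icc.2 hab.le) hab
  · rw [interior_Icc]
    exact fun x hx => (hf x (Set.Ioo_subset_Icc_self hx)).hasDerivWithinAt
  · rwa [interior_Icc]

namespace Real

lemma sinh_le_mul_cosh {x : ℝ} (hx : 0 ≤ x) : sinh x ≤ x * cosh x := by
  have := le_of_hasDerivAt_of_nonneg (f := fun t => t * cosh t - sinh t) hx
    (fun t _ => ((hasDerivAt_id t).mul (hasDerivAt_cosh t)).sub (hasDerivAt_sinh t))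
    (fun t ht => by
      have := sinh_nonneg_iff.2 ht.1.le
      simp only [id_eq]
      nlinarith [ht.1])
  simp only [zero_mul, sinh_zero, sub_zero] at this
  linarith

lemma two_mul_cosh_sub_one_le_mul_sinh (x : ℝ) : 2 * (cosh x - 1) ≤ x * sinh x := by
  wlog hx : 0 ≤ x generalizing x
  · simpa using this (-x) (by linarith)
  have := le_of_hasDerivAt_of_nonneg (f := fun t => t * sinh t - 2 * cosh t) hx
    (fun t _ => ((hasDerivAt_id t).mul (hasDerivAt_sinh t)).sub ((hasDerivAt_cosh t).const_mul 2))
    (fun t ht => by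
      have := sinh_le_mul_cosh ht.1.le
      simp only [id_eq]
      linarith)
  simp only [zero_mul, cosh_zero] at this
  linarith

lemma sq_div_two_lt_cosh_sub_one {x : ℝ} (hx : x ≠ 0) : x ^ 2 / 2 < cosh x - 1 := by
  have hsq : (x / 2) ^ 2 < sinh (x / 2) ^ 2 := by
    rw [sq_lt_sq, abs_sinh]
    exact self_lt_sinh_iff.2 (abs_pos.2 (by positivity))
  have hcosh : cosh x = 1 + 2 * sinh (x / 2) ^ 2 := by
    conv_lhs => rw [show x = 2 * (x / 2) by ring, cosh_two_mul, cosh_sq]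
    ring
  linarith

lemma one_sub_cos_le_mul_sin {x : ℝ} (hx : |x| ≤ π / 2) : 1 - cos x ≤ x * sin x := by
  wlog h0 : 0 ≤ x generalizing x
  · simpa using this (x := -x) (by rwa [abs_neg]) (by linarith)
  have := le_of_hasDerivAt_of_nonneg (f := fun t => t * sin t + cos t) h0
    (fun t _ => ((hasDerivAt_id t).mul (hasDerivAt_sin t)).add (hasDerivAt_cos t))
    (fun t ht => by
      have := cos_nonneg_of_mem_Icc (x := t)
        ⟨by linarith [pi_pos, ht.1], by linarith [ht.2, le_of_abs_le hx]⟩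
      simp only [id_eq]
      nlinarith [ht.1])
  simp only [zero_mul, cos_zero, zero_add] at this
  linarith

lemma abs_sub_sin_lt_one_sub_cos {x : ℝ} (hx0 : x ≠ 0) (hx : |x| ≤ π / 2) :
    |x - sin x| < 1 - cos x := by
  wlog h0 : 0 < x generalizing x
  · have := this (x := -x) (neg_ne_zero.2 hx0) (by rwa [abs_neg])
      (neg_pos.2 (lt_of_le_of_ne (not_lt.1 h0) hx0))
    rwa [sin_neg, cos_neg, ← neg_add', abs_neg, ← sub_eq_add_neg] at this
  rw [abs_of_nonneg (sub_nonneg.2 (sin_le h0.le))]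
  have := lt_of_hasDerivAt_of_pos (f := fun t => sin t - t - cos t) h0
    (fun t _ => ((hasDerivAt_sin t).sub (hasDerivAt_id t)).sub (hasDerivAt_cos t))
    (fun t ht => by
      have hs := sin_pos_of_pos_of_lt_pi ht.1 (by linarith [ht.2, le_of_abs_le hx, pi_pos])
      have hc := cos_pos_of_mem_Ioo (x := t)
        ⟨by linarith [pi_pos, ht.1], by linarith [ht.2, le_of_abs_le hx]⟩
      nlinarith [sin_sq_add_cos_sq t, mul_pos hs hc])
  simp only [sin_zero, cos_zero] at this
  linarith

lemma mul_cos_le_sin {x : ℝ} (hx0 : 0 ≤ x) (hx : x ≤ π) : x * cos x ≤ sin x := by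
  have := le_of_hasDerivAt_of_nonneg (f := fun t => sin t - t * cos t) hx0
    (fun t _ => (hasDerivAt_sin t).sub ((hasDerivAt_id t).mul (hasDerivAt_cos t)))
    (fun t ht => by
      have := sin_nonneg_of_nonneg_of_le_pi ht.1.le (by linarith [ht.2])
      simp only [id_eq]
      nlinarith [ht.1])
  simp only [sin_zero, zero_mul, sub_zero] at this
  linarith

lemma mul_one_add_cos_le_two_mul_sin {x : ℝ} (hx0 : 0 ≤ x) (hx : x ≤ π) :
    x * (1 + cos x) ≤ 2 * sin x := by
  have hc : 0 ≤ cos (x / 2) := cos_nonneg_of_mem_Icc ⟨by linarith [pi_pos], by linarith⟩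
  have h := mul_cos_le_sin (x := x / 2) (by linarith) (by linarith [pi_pos])
  have hx2 : x = 2 * (x / 2) := by ring
  rw [hx2, cos_two_mul, sin_two_mul]
  nlinarith [mul_le_mul_of_nonneg_left h hc]

lemma two_mul_sinh_le_mul_one_add_cosh {x : ℝ} (hx0 : 0 ≤ x) :
    2 * sinh x ≤ x * (1 + cosh x) := by
  have hc : 0 < cosh (x / 2) := cosh_pos _
  have h := sinh_le_mul_cosh (x := x / 2) (by linarith)
  have hx2 : x = 2 * (x / 2) := by ring
  rw [hx2, cosh_two_mul, sinh_two_mul]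
  nlinarith [mul_le_mul_of_nonneg_left h hc.le, cosh_sq (x / 2)]

lemma sq_add_sq_lt_sq_cosh_sub_cos {u v : ℝ} (hv : |v| ≤ π / 2) (huv : u ≠ 0 ∨ v ≠ 0) :
    (sinh u * cos v - u) ^ 2 + (cosh u * sin v - v) ^ 2 < (cosh u - cos v) ^ 2 := by
  have hc : 0 ≤ cos v := cos_nonneg_of_mem_Icc (abs_le.1 hv)
  have hg_lt : v ≠ 0 → (v - sin v) ^ 2 < (1 - cos v) ^ 2 := fun hv0 => by
    rw [sq_lt_sq, abs_of_nonneg (sub_nonneg.2 (cos_le_one v))]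
    exact abs_sub_sin_lt_one_sub_cos hv0 hv
  have hg : (v - sin v) ^ 2 ≤ (1 - cos v) ^ 2 := by
    rcases eq_or_ne v 0 with rfl | hv0
    · simp
    · exact (hg_lt hv0).le
  have hP1 : 0 ≤ (cosh u - 1) * (v * sin v + cos v - 1) :=
    mul_nonneg (by linarith [one_le_cosh u]) (by linarith [one_sub_cos_le_mul_sin hv])
  have hP2 : 0 ≤ cos v * (u * sinh u - 2 * (cosh u - 1)) :=
    mul_nonneg hc (by linarith [two_mul_cosh_sub_one_le_mul_sinh u])
  rw [← sub_pos]
  have key : (cosh u - cos v) ^ 2 - ((sinh u * cos v - u) ^ 2 + (cosh u * sin v - v) ^ 2)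
      = ((1 - cos v) ^ 2 - (v - sin v) ^ 2) + 2 * (cosh u - 1) * (v * sin v + cos v - 1)
        + 2 * (cos v * (u * sinh u - 2 * (cosh u - 1))) + (2 * (cosh u - 1) - u ^ 2) := by
    linear_combination (1 - sin v ^ 2) * cosh_sq_sub_sinh_sq u - sinh u ^ 2 * sin_sq_add_cos_sq v
  rw [key]
  rcases eq_or_ne u 0 with rfl | hu
  · simpa using hg_lt (huv.resolve_left (not_not.2 rfl))
  · linarith [sq_div_two_lt_cosh_sub_one hu]

lemma integral_cosh_mul_le (u : ℝ) :
    ∫ t in (0 : ℝ)..1, cosh (t * u) ≤ (1 + cosh u) / 2 := by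
  wlog hu : 0 ≤ u generalizing u
  · simpa [mul_neg] using this (-u) (by linarith)
  have hI : u * ∫ t in (0 : ℝ)..1, cosh (t * u) = sinh u := by
    rw [intervalIntegral.mul_integral_comp_mul_right,
      intervalIntegral.integral_eq_sub_of_hasDerivAt (fun x _ => hasDerivAt_sinh x)
        (continuous_cosh.intervalIntegrable _ _)]
    simp
  rcases hu.eq_or_lt with rfl | hu
  · simp
  · refine le_of_mul_le_mul_left ?_ hu
    rw [hI]
    linarith [two_mul_sinh_le_mul_one_add_cosh hu.le]

lemma le_integral_cos_mul {v : ℝ} (hv : |v| ≤ π) :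
    (1 + cos v) / 2 ≤ ∫ t in (0 : ℝ)..1, cos (t * v) := by
  wlog h0 : 0 ≤ v generalizing v
  · simpa [mul_neg] using this (v := -v) (by rwa [abs_neg]) (by linarith)
  have hI : v * ∫ t in (0 : ℝ)..1, cos (t * v) = sin v := by
    rw [intervalIntegral.mul_integral_comp_mul_right, integral_cos]
    simp
  rcases h0.eq_or_lt with rfl | h0
  · simp
  · refine le_of_mul_le_mul_left ?_ h0
    rw [hI]
    linarith [mul_one_add_cos_le_two_mul_sin h0.le (le_of_abs_le hv)]

end Real

namespace Complex

lemma sinh_re (z : ℂ) : (sinh z).re = Real.sinh z.re * Real.cos z.im := by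
  conv_lhs => rw [← re_add_im z, sinh_add, sinh_mul_I, cosh_mul_I]
  simp [← ofReal_sinh, ← ofReal_cosh, ← ofReal_sin, ← ofReal_cos]

lemma sinh_im (z : ℂ) : (sinh z).im = Real.cosh z.re * Real.sin z.im := by
  conv_lhs => rw [← re_add_im z, sinh_add, sinh_mul_I, cosh_mul_I]
  simp [← ofReal_sinh, ← ofReal_cosh, ← ofReal_sin, ← ofReal_cos]

lemma cosh_re (z : ℂ) : (cosh z).re = Real.cosh z.re * Real.cos z.im := by
  conv_lhs => rw [← re_add_im z, cosh_add, sinh_mul_I, cosh_mul_I]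
  simp [← ofReal_sinh, ← ofReal_cosh, ← ofReal_sin, ← ofReal_cos]

lemma cosh_im (z : ℂ) : (cosh z).im = Real.sinh z.re * Real.sin z.im := by
  conv_lhs => rw [← re_add_im z, cosh_add, sinh_mul_I, cosh_mul_I]
  simp [← ofReal_sinh, ← ofReal_cosh, ← ofReal_sin, ← ofReal_cos]

lemma norm_cosh_sub_one (z : ℂ) : ‖cosh z - 1‖ = Real.cosh z.re - Real.cos z.im := by
  refine (sq_eq_sq₀ (norm_nonneg _)
    (by linarith [Real.one_le_cosh z.re, Real.cos_le_one z.im])).1 ?_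
  rw [Complex.sq_norm, normSq_apply, sub_re, sub_im, cosh_re, cosh_im, one_re, one_im]
  linear_combination (Real.cos z.im ^ 2 - 1) * Real.cosh_sq_sub_sinh_sq z.re
    + Real.sinh z.re ^ 2 * Real.sin_sq_add_cos_sq z.im

lemma norm_sinh_sub_self_sq (z : ℂ) :
    ‖sinh z - z‖ ^ 2 = (Real.sinh z.re * Real.cos z.im - z.re) ^ 2
      + (Real.cosh z.re * Real.sin z.im - z.im) ^ 2 := by
  rw [Complex.sq_norm, normSq_apply, sub_re, sub_im, sinh_re, sinh_im]
  ring

lemma norm_sinh_sub_self_lt_norm_cosh_sub_one {z : ℂ} (hz : z ≠ 0) (him : |z.im| ≤ π / 2) :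
    ‖sinh z - z‖ < ‖cosh z - 1‖ := by
  refine lt_of_pow_lt_pow_left₀ 2 (norm_nonneg _) ?_
  rw [norm_sinh_sub_self_sq, norm_cosh_sub_one]
  refine Real.sq_add_sq_lt_sq_cosh_sub_cos him ?_
  by_contra! h
  exact hz (ext h.1 h.2)

lemma sinh_sub_self_eq_integral (z : ℂ) :
    sinh z - z = ∫ t in (0 : ℝ)..1, z * (cosh (t * z) - 1) := by
  have hderiv (t : ℝ) :
      HasDerivAt (fun s : ℝ => sinh (s * z) - s * z) (z * (cosh (t * z) - 1)) t := by
    have hlin : HasDerivAt (fun s : ℝ => (s : ℂ) * z) z t := by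
      simpa using (hasDerivAt_id t).ofReal_comp.mul_const z
    exact (((hasDerivAt_sinh _).comp t hlin).sub hlin).congr_deriv (by ring)
  rw [intervalIntegral.integral_eq_sub_of_hasDerivAt (fun t _ => hderiv t)
    ((by fun_prop : Continuous fun t : ℝ => z * (cosh (t * z) - 1)).intervalIntegrable _ _)]
  simp

lemma norm_sinh_sub_self_le {z : ℂ} (him : |z.im| ≤ π) :
    ‖sinh z - z‖ ≤ ‖z‖ / 2 * ‖cosh z - 1‖ := by
  have hcosh : IntervalIntegrable (fun t : ℝ => Real.cosh (t * z.re)) MeasureTheory.volume 0 1 :=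
    (by fun_prop : Continuous fun t : ℝ => Real.cosh (t * z.re)).intervalIntegrable _ _
  have hcos : IntervalIntegrable (fun t : ℝ => Real.cos (t * z.im)) MeasureTheory.volume 0 1 :=
    (by fun_prop : Continuous fun t : ℝ => Real.cos (t * z.im)).intervalIntegrable _ _
  rw [sinh_sub_self_eq_integral]
  calc ‖∫ t in (0 : ℝ)..1, z * (cosh (t * z) - 1)‖
      ≤ ∫ t in (0 : ℝ)..1, ‖z‖ * (Real.cosh (t * z.re) - Real.cos (t * z.im)) := by
        refine intervalIntegral.norm_integral_le_of_norm_le zero_le_one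
          (Filter.Eventually.of_forall fun t _ => ?_) ((hcosh.sub hcos).const_mul _)
        rw [norm_mul, norm_cosh_sub_one]
        simp
    _ = ‖z‖ * ((∫ t in (0 : ℝ)..1, Real.cosh (t * z.re))
          - ∫ t in (0 : ℝ)..1, Real.cos (t * z.im)) := by
        rw [intervalIntegral.integral_const_mul, intervalIntegral.integral_sub hcosh hcos]
    _ ≤ ‖z‖ * ((1 + Real.cosh z.re) / 2 - (1 + Real.cos z.im) / 2) := by
        gcongr
        · exact Real.integral_cosh_mul_le z.re
        · exact Real.le_integral_cos_mul him
    _ = ‖z‖ / 2 * ‖cosh z - 1‖ := by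
        rw [norm_cosh_sub_one]
        ring

-- Both sides are `0` when `sinh z = 0`, by the convention `x / 0 = 0`.
lemma cosh_div_sinh_sub_div_sinh_sq (z : ℂ) :
    cosh z / sinh z - z / sinh z ^ 2 = (sinh (2 * z) - 2 * z) / (cosh (2 * z) - 1) := by
  have hden : cosh (2 * z) - 1 = 2 * sinh z ^ 2 := by
    rw [cosh_two_mul, cosh_sq]
    ring
  rw [sinh_two_mul, hden]
  rcases eq_or_ne (sinh z) 0 with h | h
  · simp [h]
  · field_simp

end Complex

theorem stmt_9 :
    (∀ z : ℂ, z ≠ 0 → |z.im| ≤ π / 4 →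
      ‖Complex.cosh z / Complex.sinh z - z / Complex.sinh z ^ 2‖ < 1)
    ∧
    (∀ z : ℂ, z ≠ 0 → |z.im| ≤ π / 2 →
      ‖Complex.cosh z / Complex.sinh z - z / Complex.sinh z ^ 2‖
        ≤ ‖z‖) := by
  have him_two_mul (z : ℂ) : |(2 * z).im| = 2 * |z.im| := by simp [abs_mul]
  refine ⟨fun z hz him => ?_, fun z _ him => ?_⟩
  · have h := Complex.norm_sinh_sub_self_lt_norm_cosh_sub_one (mul_ne_zero two_ne_zero hz)
      (by rw [him_two_mul]; linarith)
    rw [Complex.cosh_div_sinh_sub_div_sinh_sq, norm_div, div_lt_one ((norm_nonneg _).trans_lt h)]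
    exact h
  · have h := Complex.norm_sinh_sub_self_le (z := 2 * z) (by rw [him_two_mul]; linarith)
    rw [Complex.cosh_div_sinh_sub_div_sinh_sq, norm_div]
    refine div_le_of_le_mul₀ (norm_nonneg _) (norm_nonneg _) (h.trans_eq ?_)
    rw [norm_mul, Complex.norm_two]
    ring
end
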